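/- arXiv:2408.08706 — 2 statements merged into one kernel-verified Lean document; each statement's English description precedes it below -/
import Mathlib

section
/- Optimality of the tailored sampling distribution: the pmf μ* belongs to Λ and minimizes the summed variance over Λ, i.e., for every μ ∈ Λ, Σ_{k=1}^K V_{A~μ*}(ρ^{π^(k),μ*}(A) q(A)) ≤ Σ_{k=1}^K V_{A~μ}(ρ^{π^(k),μ}(A) q(A)). -/
open Finset

/-- Expectation of `f` under the pmf `μ`, as a finite sum over the support of `μ`:
`E_{A~μ}[f(A)] = Σ_{a : μ(a)>0} μ(a) f(a)`. -/
noncomputable def expOn {A : Type*} [Fintype A] (μ f : A → ℝ) : ℝ :=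
  ∑ a ∈ Finset.univ.filter (fun a => 0 < μ a), μ a * f a

/-- Variance of `f` under the pmf `μ`: `V_{A~μ}(f(A)) = E[f²] - (E[f])²`. -/
noncomputable def varOn {A : Type*} [Fintype A] (μ f : A → ℝ) : ℝ :=
  expOn μ (fun a => f a ^ 2) - expOn μ f ^ 2

/-- Importance sampling ratio `ρ^{π,μ}(a) = π(a)/μ(a)`. -/
noncomputable def isr {A : Type*} (π μ : A → ℝ) (a : A) : ℝ := π a / μ a

/-- The tailored behavior pmf `μ*(a) ∝ sqrt(Σ_k π^(k)(a)² q(a)²)`, normalized over `a ∈ 𝒜`;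
if the weights vanish identically, `μ*` is the uniform pmf on `𝒜`. -/
noncomputable def muStar {A : Type*} [Fintype A] (K : ℕ) (π : Fin K → A → ℝ)
    (q : A → ℝ) (a : A) : ℝ :=
  if (∑ b : A, Real.sqrt (∑ k : Fin K, π k b ^ 2 * q b ^ 2)) = 0 then
    (Fintype.card A : ℝ)⁻¹
  else
    Real.sqrt (∑ k : Fin K, π k a ^ 2 * q a ^ 2) /
      ∑ b : A, Real.sqrt (∑ k : Fin K, π k b ^ 2 * q b ^ 2)

/-- `w^(k)(a) = (π^(k)(a) q(a))²`. -/
noncomputable def wS {A : Type*} (K : ℕ) (π : Fin K → A → ℝ) (q : A → ℝ)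
    (k : Fin K) (a : A) : ℝ :=
  (π k a * q a) ^ 2

/-- `w̄(a) = (1/K) Σ_j w^(j)(a)`. -/
noncomputable def wbarS {A : Type*} (K : ℕ) (π : Fin K → A → ℝ) (q : A → ℝ) (a : A) : ℝ :=
  (∑ j : Fin K, wS K π q j a) / K

/-- `η^(k)(a) = w^(k)(a) / w̄(a)`. -/
noncomputable def etaS {A : Type*} (K : ℕ) (π : Fin K → A → ℝ) (q : A → ℝ)
    (k : Fin K) (a : A) : ℝ :=
  wS K π q k a / wbarS K π q a

/-- `η̲ = min_{k,a} η^(k)(a)`. -/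
noncomputable def etaLoS {A : Type*} (K : ℕ) (π : Fin K → A → ℝ) (q : A → ℝ) : ℝ :=
  ⨅ x : Fin K × A, etaS K π q x.1 x.2

/-- `η̄ = max_{k,a} η^(k)(a)`. -/
noncomputable def etaHiS {A : Type*} (K : ℕ) (π : Fin K → A → ℝ) (q : A → ℝ) : ℝ :=
  ⨆ x : Fin K × A, etaS K π q x.1 x.2


/-- `s(a) = sqrt(Σ_k π^(k)(a)² q(a)²)`. -/
noncomputable def sA {A : Type*} (K : ℕ) (π : Fin K → A → ℝ) (q : A → ℝ) (a : A) : ℝ :=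
  Real.sqrt (∑ k : Fin K, π k a ^ 2 * q a ^ 2)

lemma sA_nonneg {A : Type*} (K : ℕ) (π : Fin K → A → ℝ) (q : A → ℝ) (a : A) :
    0 ≤ sA K π q a := Real.sqrt_nonneg _

lemma sA_sq {A : Type*} (K : ℕ) (π : Fin K → A → ℝ) (q : A → ℝ) (a : A) :
    sA K π q a ^ 2 = ∑ k : Fin K, π k a ^ 2 * q a ^ 2 :=
  Real.sq_sqrt (by positivity)

lemma sA_eq_zero_of {A : Type*} {K : ℕ} {π : Fin K → A → ℝ} {q : A → ℝ} {a : A}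
    (h : ∀ k, π k a * q a = 0) : sA K π q a = 0 := by
  unfold sA
  rw [Finset.sum_eq_zero (fun k _ => by rw [← mul_pow, h k]; norm_num), Real.sqrt_zero]

lemma eq_zero_of_sA_eq_zero {A : Type*} {K : ℕ} {π : Fin K → A → ℝ} {q : A → ℝ} {a : A}
    (h : sA K π q a = 0) (k : Fin K) : π k a * q a = 0 := by
  have hle : (∑ k : Fin K, π k a ^ 2 * q a ^ 2) ≤ 0 := Real.sqrt_eq_zero'.1 h
  have hge : (0:ℝ) ≤ ∑ k : Fin K, π k a ^ 2 * q a ^ 2 := by positivity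
  have hsum : (∑ k : Fin K, π k a ^ 2 * q a ^ 2) = 0 := le_antisymm hle hge
  have := (Finset.sum_eq_zero_iff_of_nonneg (fun k _ => by positivity)).1 hsum k
    (Finset.mem_univ k)
  have h2 : (π k a * q a) ^ 2 = 0 := by rw [mul_pow]; exact this
  exact pow_eq_zero_iff two_ne_zero |>.1 h2

lemma var_sum_eq {A : Type*} [Fintype A] (K : ℕ) (q : A → ℝ) (π : Fin K → A → ℝ)
    (μ : A → ℝ) (hμ0 : ∀ a, 0 ≤ μ a)
    (hcov : ∀ (a : A) (k : Fin K), μ a = 0 → π k a * q a = 0) :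
    ∑ k : Fin K, varOn μ (fun a => isr (π k) μ a * q a)
      = (∑ a ∈ Finset.univ.filter (fun a => 0 < μ a), sA K π q a ^ 2 / μ a)
        - ∑ k : Fin K, (∑ a : A, π k a * q a) ^ 2 := by
  unfold varOn
  rw [Finset.sum_sub_distrib]
  congr 1
  · unfold expOn isr
    rw [Finset.sum_comm]
    refine Finset.sum_congr rfl fun a ha => ?_
    have hμa : μ a ≠ 0 := ((Finset.mem_filter.1 ha).2).ne'
    rw [sA_sq, Finset.sum_div]
    refine Finset.sum_congr rfl fun k _ => ?_
    field_simp
  · refine Finset.sum_congr rfl fun k _ => ?_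
    congr 1
    unfold expOn isr
    have h1 : ∀ a ∈ Finset.univ.filter (fun a => 0 < μ a),
        μ a * (π k a / μ a * q a) = π k a * q a := by
      intro a ha
      have hμa : μ a ≠ 0 := ((Finset.mem_filter.1 ha).2).ne'
      field_simp
    rw [Finset.sum_congr rfl h1]
    refine Finset.sum_subset (Finset.filter_subset _ _) fun a _ ha => ?_
    have h0 : μ a = 0 := by
      by_contra h
      exact ha (Finset.mem_filter.2 ⟨Finset.mem_univ a,
        lt_of_le_of_ne (hμ0 a) (Ne.symm h)⟩)
    exact hcov a k h0

lemma T_lower {A : Type*} [Fintype A] (K : ℕ) (q : A → ℝ) (π : Fin K → A → ℝ)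
    (μ : A → ℝ) (hμ0 : ∀ a, 0 ≤ μ a) (hμ1 : ∑ a : A, μ a = 1)
    (hcov : ∀ (a : A) (k : Fin K), μ a = 0 → π k a * q a = 0) :
    (∑ b : A, sA K π q b) ^ 2
      ≤ ∑ a ∈ Finset.univ.filter (fun a => 0 < μ a), sA K π q a ^ 2 / μ a := by
  set F := Finset.univ.filter (fun a => 0 < μ a) with hF
  have hzero : ∀ a ∈ Finset.univ, a ∉ F → sA K π q a = 0 := by
    intro a _ ha
    have h0 : μ a = 0 := by
      by_contra h
      exact ha (Finset.mem_filter.2 ⟨Finset.mem_univ a,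
        lt_of_le_of_ne (hμ0 a) (Ne.symm h)⟩)
    exact sA_eq_zero_of fun k => hcov a k h0
  have hS_eq : ∑ b : A, sA K π q b = ∑ b ∈ F, sA K π q b :=
    (Finset.sum_subset (Finset.filter_subset _ _) hzero).symm
  rw [hS_eq]
  have CS := Finset.sum_sq_le_sum_mul_sum_of_sq_eq_mul F
    (r := fun a => sA K π q a) (f := μ) (g := fun a => sA K π q a ^ 2 / μ a)
    (fun a _ => hμ0 a)
    (fun a _ => div_nonneg (sq_nonneg _) (hμ0 a))
    (fun a ha => by
      have hμa : μ a ≠ 0 := ((Finset.mem_filter.1 ha).2).ne'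
      field_simp)
  calc (∑ a ∈ F, sA K π q a) ^ 2
      ≤ (∑ a ∈ F, μ a) * ∑ a ∈ F, sA K π q a ^ 2 / μ a := CS
    _ ≤ 1 * ∑ a ∈ F, sA K π q a ^ 2 / μ a := by
        refine mul_le_mul_of_nonneg_right ?_
          (Finset.sum_nonneg fun a _ => div_nonneg (sq_nonneg _) (hμ0 a))
        rw [← hμ1]
        exact Finset.sum_le_sum_of_subset_of_nonneg (Finset.filter_subset _ _)
          (fun a _ _ => hμ0 a)
    _ = _ := one_mul _

/-- `μ*` belongs to `Λ` (it is a pmf covering all contributing actions) and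
minimizes the summed importance-sampling variance over `Λ`. -/
theorem stmt1 {A : Type*} [Fintype A] [Nonempty A]
    (K : ℕ) (hK : 0 < K) (q : A → ℝ) (π : Fin K → A → ℝ)
    (hπ0 : ∀ k a, 0 ≤ π k a) (hπ1 : ∀ k, ∑ a : A, π k a = 1) :
    (∀ a, 0 ≤ muStar K π q a) ∧ (∑ a : A, muStar K π q a = 1) ∧
    (∀ (a : A) (k : Fin K), muStar K π q a = 0 → π k a * q a = 0) ∧
    (∀ μ : A → ℝ, (∀ a, 0 ≤ μ a) → (∑ a : A, μ a = 1) →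
      (∀ (a : A) (k : Fin K), μ a = 0 → π k a * q a = 0) →
      ∑ k : Fin K, varOn (muStar K π q) (fun a => isr (π k) (muStar K π q) a * q a) ≤
        ∑ k : Fin K, varOn μ (fun a => isr (π k) μ a * q a)) := by
  classical
  set S := ∑ b : A, sA K π q b with hSdef
  have hS0 : 0 ≤ S := Finset.sum_nonneg fun b _ => sA_nonneg K π q b
  have hmu_def : ∀ a, muStar K π q a = if S = 0 then (Fintype.card A : ℝ)⁻¹
      else sA K π q a / S := fun a => rfl
  have hcard : (0:ℝ) < Fintype.card A := by
    exact_mod_cast Fintype.card_pos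
  have hnonneg : ∀ a, 0 ≤ muStar K π q a := by
    intro a
    rw [hmu_def a]
    split
    · positivity
    · exact div_nonneg (sA_nonneg K π q a) hS0
  have hsum1 : ∑ a : A, muStar K π q a = 1 := by
    by_cases hS : S = 0
    · simp only [hmu_def, hS, if_pos rfl, if_true]
      rw [Finset.sum_const, Finset.card_univ, nsmul_eq_mul,
        mul_inv_cancel₀ hcard.ne']
    · simp only [hmu_def, if_neg hS]
      rw [← Finset.sum_div, ← hSdef, div_self hS]
  have hcov : ∀ (a : A) (k : Fin K), muStar K π q a = 0 → π k a * q a = 0 := by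
    intro a k h
    rw [hmu_def a] at h
    by_cases hS : S = 0
    · rw [if_pos hS] at h
      exact absurd h (inv_ne_zero hcard.ne')
    · rw [if_neg hS] at h
      rcases div_eq_zero_iff.1 h with h' | h'
      · exact eq_zero_of_sA_eq_zero h' k
      · exact absurd h' hS
  refine ⟨hnonneg, hsum1, hcov, ?_⟩
  intro μ hμ0 hμ1 hμcov
  rw [var_sum_eq K q π μ hμ0 hμcov, var_sum_eq K q π (muStar K π q) hnonneg hcov]
  apply sub_le_sub_right
  have hT : ∑ a ∈ Finset.univ.filter (fun a => 0 < muStar K π q a),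
      sA K π q a ^ 2 / muStar K π q a = S ^ 2 := by
    by_cases hS : S = 0
    · have hs0 : ∀ a : A, sA K π q a = 0 := fun a =>
        (Finset.sum_eq_zero_iff_of_nonneg (fun b _ => sA_nonneg K π q b)).1 hS a
          (Finset.mem_univ a)
      rw [hS]
      simp [hs0]
    · have hSpos : 0 < S := lt_of_le_of_ne hS0 (Ne.symm hS)
      have hmu : ∀ a, muStar K π q a = sA K π q a / S := by
        intro a; rw [hmu_def a, if_neg hS]
      have hfilter : Finset.univ.filter (fun a => 0 < muStar K π q a)
          = Finset.univ.filter (fun a => 0 < sA K π q a) := by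
        refine Finset.filter_congr fun a _ => ?_
        rw [hmu a]
        constructor
        · intro h
          by_contra hcon
          have : sA K π q a = 0 := le_antisymm (not_lt.1 hcon) (sA_nonneg K π q a)
          rw [this, zero_div] at h
          exact lt_irrefl _ h
        · intro h; exact div_pos h hSpos
      rw [hfilter]
      have hterm : ∀ a ∈ Finset.univ.filter (fun a => 0 < sA K π q a),
          sA K π q a ^ 2 / muStar K π q a = sA K π q a * S := by
        intro a ha
        have hsa : sA K π q a ≠ 0 := ((Finset.mem_filter.1 ha).2).ne'
        rw [hmu a]
        field_simp
      rw [Finset.sum_congr rfl hterm, ← Finset.sum_mul]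
      have : ∑ a ∈ Finset.univ.filter (fun a => 0 < sA K π q a), sA K π q a = S := by
        rw [hSdef]
        refine Finset.sum_subset (Finset.filter_subset _ _) fun a _ ha => ?_
        by_contra h
        exact ha (Finset.mem_filter.2 ⟨Finset.mem_univ a,
          lt_of_le_of_ne (sA_nonneg K π q a) (Ne.symm h)⟩)
      rw [this, sq]
  rw [hT]
  exact T_lower K q π μ hμ0 hμ1 hμcov
end

section
/- Recursive expression of the PDIS variance: for every policy μ ∈ Λ and every k, at t = T−1, V(G^PDIS_k(τ^{μ_{t:T−1}}_{t:T−1}) | S_t = s) = E_{A~μ_t(·|s)}[(ρ^{π^(k),μ}_t)² q_{π^(k),t}(s,A)²] − v_{π^(k),t}(s)²; and for t ∈ {0,…,T−2}, V(G^PDIS_k(τ^{μ_{t:T−1}}_{t:T−1}) | S_t = s) = E_{A~μ_t(·|s)}[(ρ^{π^(k),μ}_t)² (Σ_{s'} p(s'|s,A) V(G^PDIS_k(τ^{μ_{t+1:T−1}}_{t+1:T−1}) | S_{t+1} = s') + ν_{π^(k),t}(s,A) + q_{π^(k),t}(s,A)²)] − v_{π^(k),t}(s)², where ν_{π,t}(s,a)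 = V_{S'~p(·|s,a)}(v_{π,t+1}(S')). -/
open Finset

section RL

variable {S A : Type*}

/-- Expectation, over the random trajectory of length `h` generated from time `t` and state `s`
by the behavior policy `μ` in the MDP with transition kernel `p`, of a functional `f` of the
trajectory (recorded as the list of successive (action, next-state) pairs).  This is the finite
sum over all trajectories weighted by their probabilities; trajectories of zero probability
contribute `0`. -/
noncomputable def Etraj [Fintype S] [Fintype A] (p : S → A → S → ℝ)
    (μ : ℕ → S → A → ℝ) : ℕ → ℕ → S → (List (A × S) → ℝ) → ℝ
  | 0, _, _, f => f []
  | h + 1, t, s, f =>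
      ∑ a : A, ∑ s' : S,
        μ t s a * p s a s' * Etraj p μ h (t + 1) s' (fun l => f ((a, s') :: l))

/-- Total (undiscounted) reward `Σ_i R_{i+1}` along a trajectory starting from state `s`. -/
noncomputable def retF (r : S → A → ℝ) : S → List (A × S) → ℝ
  | _, [] => 0
  | s, (a, s') :: l => r s a + retF r s' l

/-- The PDIS return `G^PDIS(τ^{μ_{t:T-1}}_{t:T-1}) = Σ_i (∏_{j=t}^i ρ^{π,μ}_j) R_{i+1}` of a
trajectory starting at time `t` in state `s`, with target policy `π` and behavior policy `μ`,
in its recursive form. -/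
noncomputable def pdisF (r : S → A → ℝ) (π μ : ℕ → S → A → ℝ) :
    ℕ → S → List (A × S) → ℝ
  | _, _, [] => 0
  | t, s, (a, s') :: l => π t s a / μ t s a * (r s a + pdisF r π μ (t + 1) s' l)

/-- State value function `v_{π,t}(s) = E_π[Σ_{i=t+1}^T R_i | S_t = s]` for horizon `T`. -/
noncomputable def vval [Fintype S] [Fintype A] (p : S → A → S → ℝ) (r : S → A → ℝ)
    (π : ℕ → S → A → ℝ) (T t : ℕ) (s : S) : ℝ :=
  Etraj p π (T - t) t s (retF r s)

/-- Action value function `q_{π,t}(s,a) = E_π[Σ_{i=t+1}^T R_i | S_t = s, A_t = a]`. -/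
noncomputable def qval [Fintype S] [Fintype A] (p : S → A → S → ℝ) (r : S → A → ℝ)
    (π : ℕ → S → A → ℝ) (T t : ℕ) (s : S) (a : A) : ℝ :=
  r s a + ∑ s' : S, p s a s' * vval p r π T (t + 1) s'

/-- Conditional expectation `E[G^PDIS(τ^{μ_{t:T-1}}_{t:T-1}) | S_t = s]`. -/
noncomputable def Epdis [Fintype S] [Fintype A] (p : S → A → S → ℝ) (r : S → A → ℝ)
    (π μ : ℕ → S → A → ℝ) (T t : ℕ) (s : S) : ℝ :=
  Etraj p μ (T - t) t s (pdisF r π μ t s)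

/-- Conditional variance `V(G^PDIS(τ^{μ_{t:T-1}}_{t:T-1}) | S_t = s)`. -/
noncomputable def Vpdis [Fintype S] [Fintype A] (p : S → A → S → ℝ) (r : S → A → ℝ)
    (π μ : ℕ → S → A → ℝ) (T t : ℕ) (s : S) : ℝ :=
  Etraj p μ (T - t) t s (fun l => pdisF r π μ t s l ^ 2) - Epdis p r π μ T t s ^ 2

/-- `ν_{π,t}(s,a) = V_{S'~p(·|s,a)}(v_{π,t+1}(S'))` for `t ≤ T-2`, and `ν_{π,T-1}(s,a) = 0`. -/
noncomputable def nuval [Fintype S] [Fintype A] (p : S → A → S → ℝ) (r : S → A → ℝ)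
    (π : ℕ → S → A → ℝ) (T t : ℕ) (s : S) (a : A) : ℝ :=
  if t = T - 1 then 0
  else (∑ s' : S, p s a s' * vval p r π T (t + 1) s' ^ 2)
       - (∑ s' : S, p s a s' * vval p r π T (t + 1) s') ^ 2

/-- The variance-augmented action value `ĥq_{π,t}(s,a)`:
`ĥq_{π,T-1}(s,a) = q_{π,T-1}(s,a)²` and, for `t ≤ T-2`,
`ĥq_{π,t}(s,a) = q_{π,t}(s,a)² + ν_{π,t}(s,a) + Σ_{s'} p(s'|s,a) V(G^PDIS(τ^{π_{t+1:T-1}}) | S_{t+1}=s')`. -/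
noncomputable def hq [Fintype S] [Fintype A] (p : S → A → S → ℝ) (r : S → A → ℝ)
    (π : ℕ → S → A → ℝ) (T t : ℕ) (s : S) (a : A) : ℝ :=
  if t = T - 1 then qval p r π T t s a ^ 2
  else qval p r π T t s a ^ 2 + nuval p r π T t s a
       + ∑ s' : S, p s a s' * Vpdis p r π π T (t + 1) s'

/-- The tailored behavior policy `ĥμ_t(a|s) ∝ sqrt(Σ_k π^(k)_t(a|s)² ĥq_{π^(k),t}(s,a))`,
normalized over `a ∈ 𝒜` (uniform on `𝒜` if all the weights vanish). -/
noncomputable def hmu [Fintype S] [Fintype A] (p : S → A → S → ℝ) (r : S → A → ℝ)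
    (K : ℕ) (π : Fin K → ℕ → S → A → ℝ) (T t : ℕ) (s : S) (a : A) : ℝ :=
  if (∑ b : A, Real.sqrt (∑ k : Fin K, π k t s b ^ 2 * hq p r (π k) T t s b)) = 0 then
    (Fintype.card A : ℝ)⁻¹
  else
    Real.sqrt (∑ k : Fin K, π k t s a ^ 2 * hq p r (π k) T t s a) /
      ∑ b : A, Real.sqrt (∑ k : Fin K, π k t s b ^ 2 * hq p r (π k) T t s b)

/-- `w^(k)_t(s,a) = π^(k)_t(a|s)² ĥq_{π^(k),t}(s,a)`. -/
noncomputable def wRL [Fintype S] [Fintype A] (p : S → A → S → ℝ) (r : S → A → ℝ)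
    (K : ℕ) (π : Fin K → ℕ → S → A → ℝ) (T : ℕ) (k : Fin K) (t : ℕ) (s : S) (a : A) : ℝ :=
  π k t s a ^ 2 * hq p r (π k) T t s a

/-- `η^(k)_t(s,a) = w^(k)_t(s,a) / w̄_t(s,a)` with `w̄_t(s,a) = (1/K) Σ_j w^(j)_t(s,a)`. -/
noncomputable def etaRL [Fintype S] [Fintype A] (p : S → A → S → ℝ) (r : S → A → ℝ)
    (K : ℕ) (π : Fin K → ℕ → S → A → ℝ) (T : ℕ) (k : Fin K) (t : ℕ) (s : S) (a : A) : ℝ :=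
  wRL p r K π T k t s a / ((∑ j : Fin K, wRL p r K π T j t s a) / K)

/-- `η̲_t = min_{k,s,a} η^(k)_t(s,a)`. -/
noncomputable def etaLoRL [Fintype S] [Fintype A] (p : S → A → S → ℝ) (r : S → A → ℝ)
    (K : ℕ) (π : Fin K → ℕ → S → A → ℝ) (T t : ℕ) : ℝ :=
  ⨅ x : Fin K × S × A, etaRL p r K π T x.1 t x.2.1 x.2.2

/-- `η̄_t = max_{k,s,a} η^(k)_t(s,a)`. -/
noncomputable def etaHiRL [Fintype S] [Fintype A] (p : S → A → S → ℝ) (r : S → A → ℝ)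
    (K : ℕ) (π : Fin K → ℕ → S → A → ℝ) (T t : ℕ) : ℝ :=
  ⨆ x : Fin K × S × A, etaRL p r K π T x.1 t x.2.1 x.2.2

end RL

section Aux

variable {S A : Type*} [Fintype S] [Fintype A]

lemma Etraj_add (p : S → A → S → ℝ) (ν : ℕ → S → A → ℝ) :
    ∀ (h t : ℕ) (s : S) (f g : List (A × S) → ℝ),
      Etraj p ν h t s (fun l => f l + g l) = Etraj p ν h t s f + Etraj p ν h t s g := by
  intro h
  induction h with
  | zero => intro t s f g; simp [Etraj]
  | succ n ih =>
    intro t s f g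
    simp only [Etraj]
    rw [← Finset.sum_add_distrib]
    refine Finset.sum_congr rfl fun a _ => ?_
    rw [← Finset.sum_add_distrib]
    refine Finset.sum_congr rfl fun s' _ => ?_
    rw [show Etraj p ν n (t+1) s' (fun l => f ((a, s') :: l) + g ((a, s') :: l))
        = Etraj p ν n (t+1) s' (fun l => f ((a, s') :: l))
          + Etraj p ν n (t+1) s' (fun l => g ((a, s') :: l)) from
      ih (t+1) s' (fun l => f ((a, s') :: l)) (fun l => g ((a, s') :: l)), mul_add]

lemma Etraj_smul (p : S → A → S → ℝ) (ν : ℕ → S → A → ℝ) :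
    ∀ (h t : ℕ) (s : S) (c : ℝ) (f : List (A × S) → ℝ),
      Etraj p ν h t s (fun l => c * f l) = c * Etraj p ν h t s f := by
  intro h
  induction h with
  | zero => intro t s c f; simp [Etraj]
  | succ n ih =>
    intro t s c f
    simp only [Etraj, Finset.mul_sum]
    refine Finset.sum_congr rfl fun a _ => Finset.sum_congr rfl fun s' _ => ?_
    rw [show Etraj p ν n (t+1) s' (fun l => c * f ((a, s') :: l))
        = c * Etraj p ν n (t+1) s' (fun l => f ((a, s') :: l)) from
      ih (t+1) s' c (fun l => f ((a, s') :: l))]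
    ring

lemma Etraj_one (p : S → A → S → ℝ) (ν : ℕ → S → A → ℝ)
    (hp1 : ∀ s a, ∑ s' : S, p s a s' = 1) :
    ∀ (h t : ℕ) (s : S), (∀ i s', t ≤ i → i < t + h → ∑ a : A, ν i s' a = 1) →
      Etraj p ν h t s (fun _ => (1 : ℝ)) = 1 := by
  intro h
  induction h with
  | zero => intro t s _; simp [Etraj]
  | succ n ih =>
    intro t s hν
    simp only [Etraj]
    have hin : ∀ (a : A) (s' : S), Etraj p ν n (t+1) s' (fun _ => (1 : ℝ)) = 1 :=
      fun a s' => ih (t+1) s' (fun i s'' h1 h2 => hν i s'' (by omega) (by omega))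
    calc ∑ a : A, ∑ s' : S, ν t s a * p s a s' *
            Etraj p ν n (t+1) s' (fun l => (fun _ => (1:ℝ)) ((a, s') :: l))
        = ∑ a : A, ∑ s' : S, ν t s a * p s a s' := by
          refine Finset.sum_congr rfl fun a _ => Finset.sum_congr rfl fun s' _ => ?_
          rw [show (fun l => (fun _ => (1:ℝ)) ((a, s') :: l)) = (fun _ => (1:ℝ)) from rfl,
            hin a s', mul_one]
      _ = ∑ a : A, ν t s a * ∑ s' : S, p s a s' := by
          simp [Finset.mul_sum]
      _ = 1 := by simp only [hp1, mul_one]; exact hν t s le_rfl (by omega)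

lemma Etraj_const (p : S → A → S → ℝ) (ν : ℕ → S → A → ℝ)
    (hp1 : ∀ s a, ∑ s' : S, p s a s' = 1) (h t : ℕ) (s : S)
    (hν : ∀ i s', t ≤ i → i < t + h → ∑ a : A, ν i s' a = 1) (c : ℝ) :
    Etraj p ν h t s (fun _ => c) = c := by
  have h1 := Etraj_smul p ν h t s c (fun _ => (1:ℝ))
  have h2 := Etraj_one p ν hp1 h t s hν
  calc Etraj p ν h t s (fun _ => c) = Etraj p ν h t s (fun l => c * (fun _ => (1:ℝ)) l) := by
        simp
    _ = c * Etraj p ν h t s (fun _ => (1:ℝ)) := h1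
    _ = c := by rw [h2, mul_one]

/-- affine functional: `E[c * (d + f)] = c * (d + E f)` -/
lemma Etraj_affine (p : S → A → S → ℝ) (ν : ℕ → S → A → ℝ)
    (hp1 : ∀ s a, ∑ s' : S, p s a s' = 1) (h t : ℕ) (s : S)
    (hν : ∀ i s', t ≤ i → i < t + h → ∑ a : A, ν i s' a = 1)
    (c d : ℝ) (f : List (A × S) → ℝ) :
    Etraj p ν h t s (fun l => c * (d + f l)) = c * (d + Etraj p ν h t s f) := by
  have e1 : (fun l => c * (d + f l)) = (fun l => (fun _ => c*d) l + (fun l => c * f l) l) := by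
    funext l; ring
  rw [e1, Etraj_add p ν h t s, Etraj_smul p ν h t s c f, Etraj_const p ν hp1 h t s hν]
  ring

/-- quadratic functional: `E[c * (d + f)²] = c * (d² + 2 d E[f] + E[f²])`. -/
lemma Etraj_quad (p : S → A → S → ℝ) (ν : ℕ → S → A → ℝ)
    (hp1 : ∀ s a, ∑ s' : S, p s a s' = 1) (h t : ℕ) (s : S)
    (hν : ∀ i s', t ≤ i → i < t + h → ∑ a : A, ν i s' a = 1)
    (c d : ℝ) (f : List (A × S) → ℝ) :
    Etraj p ν h t s (fun l => c * (d + f l) ^ 2)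
      = c * (d ^ 2 + 2 * d * Etraj p ν h t s f
          + Etraj p ν h t s (fun l => f l ^ 2)) := by
  have e1 : (fun l => c * (d + f l) ^ 2)
      = (fun l => (fun l => (fun _ => c*d^2) l + (fun l => (c*(2*d)) * f l) l) l
          + (fun l => c * (fun l => f l ^ 2) l) l) := by
    funext l; ring
  rw [e1, Etraj_add p ν h t s, Etraj_add p ν h t s, Etraj_smul p ν h t s (c*(2*d)) f,
    Etraj_smul p ν h t s c (fun l => f l ^ 2), Etraj_const p ν hp1 h t s hν]
  ring

lemma sum_p_affine (p : S → A → S → ℝ) (hp1 : ∀ s a, ∑ s' : S, p s a s' = 1)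
    (s : S) (a : A) (r0 : ℝ) (v : S → ℝ) :
    ∑ s' : S, p s a s' * (r0 + v s') = r0 + ∑ s' : S, p s a s' * v s' := by
  calc ∑ s' : S, p s a s' * (r0 + v s')
      = ∑ s' : S, (p s a s' * r0 + p s a s' * v s') := by
        refine Finset.sum_congr rfl fun s' _ => ?_; ring
    _ = (∑ s' : S, p s a s' * r0) + ∑ s' : S, p s a s' * v s' := Finset.sum_add_distrib
    _ = r0 + ∑ s' : S, p s a s' * v s' := by rw [← Finset.sum_mul, hp1, one_mul]

/-- recursion for the state value function. -/
lemma vval_rec (p : S → A → S → ℝ) (r : S → A → ℝ) (π : ℕ → S → A → ℝ) (T : ℕ)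
    (hp1 : ∀ s a, ∑ s' : S, p s a s' = 1)
    (hπm : ∀ i s', i < T → ∑ a : A, π i s' a = 1)
    (t : ℕ) (ht : t < T) (s : S) :
    vval p r π T t s = ∑ a : A, π t s a * qval p r π T t s a := by
  have hTt : T - t = (T - (t+1)) + 1 := by omega
  have hmass : ∀ i s', t + 1 ≤ i → i < (t+1) + (T - (t+1)) → ∑ a : A, π i s' a = 1 :=
    fun i s' h1 h2 => hπm i s' (by omega)
  unfold vval
  rw [hTt]
  simp only [Etraj]
  refine Finset.sum_congr rfl fun a _ => ?_
  have hin : ∀ s' : S, Etraj p π (T - (t+1)) (t+1) s' (fun l => retF r s ((a, s') :: l))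
      = r s a + vval p r π T (t+1) s' := by
    intro s'
    have e1 : (fun l => retF r s ((a, s') :: l))
        = (fun l => (1:ℝ) * (r s a + retF r s' l)) := by
      funext l; simp [retF]
    rw [e1, Etraj_affine p π hp1 _ _ _ hmass, one_mul, vval]
  calc ∑ s' : S, π t s a * p s a s' * Etraj p π (T-(t+1)) (t+1) s'
          (fun l => retF r s ((a, s') :: l))
      = ∑ s' : S, π t s a * (p s a s' * (r s a + vval p r π T (t+1) s')) := by
        refine Finset.sum_congr rfl fun s' _ => ?_; rw [hin s']; ring
    _ = π t s a * ∑ s' : S, p s a s' * (r s a + vval p r π T (t+1) s') := by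
        rw [Finset.mul_sum]
    _ = π t s a * qval p r π T t s a := by
        rw [sum_p_affine p hp1 s a, qval]

/-- Unbiasedness of PDIS: `E_μ[G^PDIS] = v_π`. -/
lemma Epdis_eq_vval (p : S → A → S → ℝ) (r : S → A → ℝ) (π μ : ℕ → S → A → ℝ) (T : ℕ)
    (hp1 : ∀ s a, ∑ s' : S, p s a s' = 1)
    (hπm : ∀ i s', i < T → ∑ a : A, π i s' a = 1)
    (hμm : ∀ i s', i < T → ∑ a : A, μ i s' a = 1)
    (hΛ : ∀ (t : ℕ) (s : S) (a : A), t < T →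
      μ t s a = 0 → π t s a * qval p r π T t s a = 0) :
    ∀ (h t : ℕ) (s : S), t + h = T →
      Etraj p μ h t s (pdisF r π μ t s) = vval p r π T t s := by
  intro h
  induction h with
  | zero =>
    intro t s ht
    subst ht
    simp [Etraj, pdisF, vval, retF]
  | succ n ih =>
    intro t s ht
    have htT : t < T := by omega
    have hmass : ∀ i s', t + 1 ≤ i → i < (t+1) + n → ∑ a : A, μ i s' a = 1 :=
      fun i s' h1 h2 => hμm i s' (by omega)
    simp only [Etraj]
    have hin : ∀ (a : A) (s' : S),
        Etraj p μ n (t+1) s' (fun l => pdisF r π μ t s ((a, s') :: l))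
          = π t s a / μ t s a * (r s a + vval p r π T (t+1) s') := by
      intro a s'
      have e1 : (fun l => pdisF r π μ t s ((a, s') :: l))
          = (fun l => (π t s a / μ t s a) * (r s a + pdisF r π μ (t+1) s' l)) := by
        funext l; simp [pdisF]
      rw [e1, Etraj_affine p μ hp1 _ _ _ hmass, ih (t+1) s' (by omega)]
    calc ∑ a : A, ∑ s' : S, μ t s a * p s a s' *
            Etraj p μ n (t+1) s' (fun l => pdisF r π μ t s ((a, s') :: l))
        = ∑ a : A, μ t s a * (π t s a / μ t s a) * qval p r π T t s a := by
          refine Finset.sum_congr rfl fun a _ => ?_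
          calc ∑ s' : S, μ t s a * p s a s' *
                  Etraj p μ n (t+1) s' (fun l => pdisF r π μ t s ((a, s') :: l))
              = ∑ s' : S, μ t s a * (π t s a / μ t s a) *
                  (p s a s' * (r s a + vval p r π T (t+1) s')) := by
                refine Finset.sum_congr rfl fun s' _ => ?_
                rw [hin a s']; ring
            _ = μ t s a * (π t s a / μ t s a) *
                  ∑ s' : S, p s a s' * (r s a + vval p r π T (t+1) s') := by
                rw [Finset.mul_sum]
            _ = μ t s a * (π t s a / μ t s a) * qval p r π T t s a := by
                rw [sum_p_affine p hp1 s a, qval]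
      _ = ∑ a : A, π t s a * qval p r π T t s a := by
          refine Finset.sum_congr rfl fun a _ => ?_
          by_cases hma : μ t s a = 0
          · rw [hma]
            simp [hΛ t s a htT hma]
          · rw [mul_comm (μ t s a) (π t s a / μ t s a), div_mul_cancel₀ _ hma]
      _ = vval p r π T t s := (vval_rec p r π T hp1 hπm t htT s).symm

/-- Unified one-step recursion for the PDIS variance, valid for every `t < T`. -/
lemma Vpdis_rec (p : S → A → S → ℝ) (r : S → A → ℝ) (π μ : ℕ → S → A → ℝ) (T : ℕ)
    (hp1 : ∀ s a, ∑ s' : S, p s a s' = 1)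
    (hπm : ∀ i s', i < T → ∑ a : A, π i s' a = 1)
    (hμm : ∀ i s', i < T → ∑ a : A, μ i s' a = 1)
    (hΛ : ∀ (t : ℕ) (s : S) (a : A), t < T →
      μ t s a = 0 → π t s a * qval p r π T t s a = 0)
    (t : ℕ) (ht : t < T) (s : S) :
    Vpdis p r π μ T t s
      = (∑ a : A, μ t s a * ((π t s a / μ t s a) ^ 2 *
          ((∑ s' : S, p s a s' * Vpdis p r π μ T (t+1) s')
            + ((∑ s' : S, p s a s' * vval p r π T (t+1) s' ^ 2)
               - (∑ s' : S, p s a s' * vval p r π T (t+1) s') ^ 2)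
            + qval p r π T t s a ^ 2)))
        - vval p r π T t s ^ 2 := by
  have hEp : Etraj p μ (T - t) t s (pdisF r π μ t s) = vval p r π T t s :=
    Epdis_eq_vval p r π μ T hp1 hπm hμm hΛ (T - t) t s (by omega)
  have hEp' : ∀ s' : S, Etraj p μ (T - (t+1)) (t+1) s' (pdisF r π μ (t+1) s')
      = vval p r π T (t+1) s' :=
    fun s' => Epdis_eq_vval p r π μ T hp1 hπm hμm hΛ (T - (t+1)) (t+1) s' (by omega)
  have hM' : ∀ s' : S, Etraj p μ (T - (t+1)) (t+1) s' (fun l => pdisF r π μ (t+1) s' l ^ 2)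
      = Vpdis p r π μ T (t+1) s' + vval p r π T (t+1) s' ^ 2 := by
    intro s'
    simp only [Vpdis, Epdis, hEp' s']
    ring
  have hTt : T - t = (T - (t+1)) + 1 := by omega
  have hmass : ∀ i s', t + 1 ≤ i → i < (t+1) + (T - (t+1)) → ∑ a : A, μ i s' a = 1 :=
    fun i s' h1 h2 => hμm i s' (by omega)
  have hEp2 : Epdis p r π μ T t s = vval p r π T t s := hEp
  have hVdef : Vpdis p r π μ T t s
      = Etraj p μ (T - t) t s (fun l => pdisF r π μ t s l ^ 2) - vval p r π T t s ^ 2 := by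
    rw [← hEp2]; rfl
  rw [hVdef]
  congr 1
  rw [hTt]
  simp only [Etraj]
  refine Finset.sum_congr rfl fun a _ => ?_
  have hin : ∀ s' : S,
      Etraj p μ (T - (t+1)) (t+1) s' (fun l => pdisF r π μ t s ((a, s') :: l) ^ 2)
        = (π t s a / μ t s a) ^ 2 *
            (r s a ^ 2 + 2 * r s a * vval p r π T (t+1) s'
              + (Vpdis p r π μ T (t+1) s' + vval p r π T (t+1) s' ^ 2)) := by
    intro s'
    have e1 : (fun l => pdisF r π μ t s ((a, s') :: l) ^ 2)
        = (fun l => (π t s a / μ t s a) ^ 2 * (r s a + pdisF r π μ (t+1) s' l) ^ 2) := by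
      funext l
      simp only [pdisF]
      ring
    rw [e1, Etraj_quad p μ hp1 _ _ _ hmass, hEp' s', hM' s']
  have hsum : ∑ s' : S, p s a s' *
        (r s a ^ 2 + 2 * r s a * vval p r π T (t+1) s'
          + (Vpdis p r π μ T (t+1) s' + vval p r π T (t+1) s' ^ 2))
      = (∑ s' : S, p s a s' * Vpdis p r π μ T (t+1) s')
        + ((∑ s' : S, p s a s' * vval p r π T (t+1) s' ^ 2)
           - (∑ s' : S, p s a s' * vval p r π T (t+1) s') ^ 2)
        + qval p r π T t s a ^ 2 := by
    calc ∑ s' : S, p s a s' *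
          (r s a ^ 2 + 2 * r s a * vval p r π T (t+1) s'
            + (Vpdis p r π μ T (t+1) s' + vval p r π T (t+1) s' ^ 2))
        = ∑ s' : S, (p s a s' * r s a ^ 2
            + (2 * r s a) * (p s a s' * vval p r π T (t+1) s')
            + (p s a s' * Vpdis p r π μ T (t+1) s'
               + p s a s' * vval p r π T (t+1) s' ^ 2)) := by
          refine Finset.sum_congr rfl fun s' _ => ?_; ring
      _ = (∑ s' : S, p s a s' * r s a ^ 2)
            + (∑ s' : S, (2 * r s a) * (p s a s' * vval p r π T (t+1) s'))
            + ((∑ s' : S, p s a s' * Vpdis p r π μ T (t+1) s')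
               + (∑ s' : S, p s a s' * vval p r π T (t+1) s' ^ 2)) := by
          rw [Finset.sum_add_distrib, Finset.sum_add_distrib, Finset.sum_add_distrib]
      _ = r s a ^ 2 + (2 * r s a) * (∑ s' : S, p s a s' * vval p r π T (t+1) s')
            + ((∑ s' : S, p s a s' * Vpdis p r π μ T (t+1) s')
               + (∑ s' : S, p s a s' * vval p r π T (t+1) s' ^ 2)) := by
          rw [← Finset.sum_mul, hp1, one_mul, ← Finset.mul_sum]
      _ = _ := by
          simp only [qval]
          ring
  calc ∑ s' : S, μ t s a * p s a s' *
          Etraj p μ (T - (t+1)) (t+1) s' (fun l => pdisF r π μ t s ((a, s') :: l) ^ 2)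
      = ∑ s' : S, (μ t s a * (π t s a / μ t s a) ^ 2) *
          (p s a s' * (r s a ^ 2 + 2 * r s a * vval p r π T (t+1) s'
            + (Vpdis p r π μ T (t+1) s' + vval p r π T (t+1) s' ^ 2))) := by
        refine Finset.sum_congr rfl fun s' _ => ?_
        rw [hin s']; ring
    _ = (μ t s a * (π t s a / μ t s a) ^ 2) *
          ∑ s' : S, p s a s' * (r s a ^ 2 + 2 * r s a * vval p r π T (t+1) s'
            + (Vpdis p r π μ T (t+1) s' + vval p r π T (t+1) s' ^ 2)) := by
        rw [Finset.mul_sum]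
    _ = _ := by
        rw [hsum]; ring


end Aux

/-- recursive expression of the PDIS variance, for every `μ ∈ Λ` and every `k`:
at `t = T-1`, `V(G^PDIS_k | S_t = s) = E_{A~μ_t}[ρ_t² q_{π^(k),t}(s,A)²] - v_{π^(k),t}(s)²`, and
for `t ∈ {0,…,T-2}`,
`V(G^PDIS_k | S_t = s) = E_{A~μ_t}[ρ_t² (Σ_{s'} p(s'|s,A) V(G^PDIS_k | S_{t+1}=s')
  + ν_{π^(k),t}(s,A) + q_{π^(k),t}(s,A)²)] - v_{π^(k),t}(s)²`. -/
theorem stmt10 {S A : Type*} [Fintype S] [Fintype A] [Nonempty S] [Nonempty A]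
    (p : S → A → S → ℝ) (r : S → A → ℝ)
    (hp0 : ∀ s a s', 0 ≤ p s a s') (hp1 : ∀ s a, ∑ s' : S, p s a s' = 1)
    (T : ℕ) (hT : 1 ≤ T)
    (K : ℕ) (π : Fin K → ℕ → S → A → ℝ)
    (hπ : ∀ k t s, t < T → (∀ a, 0 ≤ π k t s a) ∧ (∑ a : A, π k t s a = 1))
    (μ : ℕ → S → A → ℝ)
    (hμ : ∀ t s, t < T → (∀ a, 0 ≤ μ t s a) ∧ (∑ a : A, μ t s a = 1))
    (hΛ : ∀ (k : Fin K) (t : ℕ) (s : S) (a : A), t < T →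
      μ t s a = 0 → π k t s a * qval p r (π k) T t s a = 0)
    (k : Fin K) (s : S) :
    (Vpdis p r (π k) μ T (T - 1) s
      = (∑ a : A, μ (T - 1) s a *
          ((π k (T - 1) s a / μ (T - 1) s a) ^ 2 * qval p r (π k) T (T - 1) s a ^ 2))
        - vval p r (π k) T (T - 1) s ^ 2) ∧
    (∀ t : ℕ, t + 1 < T →
      Vpdis p r (π k) μ T t s
        = (∑ a : A, μ t s a *
            ((π k t s a / μ t s a) ^ 2 *
              ((∑ s' : S, p s a s' * Vpdis p r (π k) μ T (t + 1) s')
                + nuval p r (π k) T t s a + qval p r (π k) T t s a ^ 2)))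
          - vval p r (π k) T t s ^ 2) := by
  have hπm : ∀ i s', i < T → ∑ a : A, π k i s' a = 1 := fun i s' h => (hπ k i s' h).2
  have hμm : ∀ i s', i < T → ∑ a : A, μ i s' a = 1 := fun i s' h => (hμ i s' h).2
  have hΛ' : ∀ (t : ℕ) (s : S) (a : A), t < T →
      μ t s a = 0 → π k t s a * qval p r (π k) T t s a = 0 :=
    fun t s a ht h0 => hΛ k t s a ht h0
  constructor
  · have h1 : T - 1 < T := by omega
    rw [Vpdis_rec p r (π k) μ T hp1 hπm hμm hΛ' (T - 1) h1 s]
    have hT1 : T - 1 + 1 = T := by omega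
    rw [hT1]
    have hV0 : ∀ s' : S, Vpdis p r (π k) μ T T s' = 0 := by
      intro s'; simp [Vpdis, Epdis, Etraj, pdisF]
    have hv0 : ∀ s' : S, vval p r (π k) T T s' = 0 := by
      intro s'; simp [vval, Etraj, retF]
    congr 1
    refine Finset.sum_congr rfl fun a _ => ?_
    simp [hV0, hv0]
  · intro t htt
    rw [Vpdis_rec p r (π k) μ T hp1 hπm hμm hΛ' t (by omega) s]
    congr 1
    refine Finset.sum_congr rfl fun a _ => ?_
    have hnu : nuval p r (π k) T t s a
        = (∑ s' : S, p s a s' * vval p r (π k) T (t + 1) s' ^ 2)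
          - (∑ s' : S, p s a s' * vval p r (π k) T (t + 1) s') ^ 2 := by
      unfold nuval
      rw [if_neg (show ¬ t = T - 1 by omega)]
    rw [hnu]
end
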